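/- arXiv:1611.09626 — 3 statements merged into one kernel-verified Lean document; each statement's English description precedes it below -/
import Mathlib

section
/- If F is a compatible set of continuous functions on relations and f ∈ F, then f is an up-to technique: whenever a relation R progresses to f(R), it follows that R is included in the bisimilarity ≈ (the union of all bisimulations). -/
namespace Paper

abbrev Rel (ι : Type) := ι → ι → Prop

def relLE {ι : Type} (R S : Rel ι) : Prop := ∀ x y, R x y → S x y

def finiteRel {ι : Type} (R : Rel ι) : Prop := Set.Finite {p : ι × ι | R p.1 p.2}

/-- `f` is continuous: `f R ⊆ ⋃ finite S ⊆ R, f S`. -/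
def ContinuousF {ι : Type} (f : Rel ι → Rel ι) : Prop :=
  ∀ R x y, f R x y → ∃ S, relLE S R ∧ finiteRel S ∧ f S x y

def MonotoneF {ι : Type} (f : Rel ι → Rel ι) : Prop :=
  ∀ R S, relLE R S → relLE (f R) (f S)

def funUnion {ι : Type} (f g : Rel ι → Rel ι) : Rel ι → Rel ι :=
  fun R x y => f R x y ∨ g R x y

/-- `f ∪ id` -/
def fid {ι : Type} (f : Rel ι → Rel ι) : Rel ι → Rel ι := funUnion f id

def funPow {ι : Type} (f : Rel ι → Rel ι) : ℕ → Rel ι → Rel ι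
  | 0 => id
  | n + 1 => f ∘ funPow f n

/-- `f^ω = ⋃ n, f^n` -/
def funOmega {ι : Type} (f : Rel ι → Rel ι) : Rel ι → Rel ι :=
  fun R x y => ∃ n, funPow f n R x y

def funLE {ι : Type} (f g : Rel ι → Rel ι) : Prop := ∀ R, relLE (f R) (g R)

end Paper
namespace Paper

/-- A labeled transition system with a distinguished internal action `tau`. -/
structure LTS (ι Λ : Type) where
  tau : Λ
  tr : ι → Λ → ι → Prop

namespace LTS

variable {ι Λ : Type}

def wtau (L : LTS ι Λ) : ι → ι → Prop :=
  Relation.ReflTransGen (fun s t => L.tr s L.tau t)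

/-- Weak transition `⇒^α`. -/
def weak (L : LTS ι Λ) (s : ι) (a : Λ) (t : ι) : Prop :=
  (a = L.tau ∧ L.wtau s t) ∨
  ∃ s' t', L.wtau s s' ∧ L.tr s' a t' ∧ L.wtau t' t

end LTS

/-- `R` progresses to `S`. -/
def Progress {ι Λ : Type} (L : LTS ι Λ) (R S : Rel ι) : Prop :=
  relLE R S ∧ ∀ s t, R s t →
    (∀ a s', L.tr s a s' → ∃ t', L.weak t a t' ∧ S s' t') ∧
    (∀ a t', L.tr t a t' → ∃ s', L.weak s a s' ∧ S s' t')

def IsBisimulation {ι Λ : Type} (L : LTS ι Λ) (R : Rel ι) : Prop :=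
  Progress L R R

/-- Bisimilarity: the union of all bisimulations. -/
def Bisim {ι Λ : Type} (L : LTS ι Λ) : Rel ι :=
  fun s t => ∃ R, IsBisimulation L R ∧ R s t

/-- The union of a set of functions on relations. -/
def setFun {ι : Type} (F : Set ((Rel ι → Rel ι))) : Rel ι → Rel ι :=
  fun R x y => ∃ f ∈ F, f R x y

/-- `f` evolves to `g`. -/
def Evolves {ι Λ : Type} (L : LTS ι Λ) (f g : Rel ι → Rel ι) : Prop :=
  ∀ R S, Progress L R S → Progress L (f R) (g S)

/-- A compatible set of continuous functions. -/
def Compatible {ι Λ : Type} (L : LTS ι Λ) (F : Set (Rel ι → Rel ι)) : Prop :=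
  (∀ f ∈ F, ContinuousF f) ∧
  ∀ f ∈ F, Evolves L f (funOmega (fid (setFun F)))

end Paper

open Paper

namespace Stmt6Aux

variable {ι Λ : Type}

/-- Monotone envelope of `g`. -/
def env (g : Rel ι → Rel ι) : Rel ι → Rel ι :=
  fun T x y => ∃ S, relLE S T ∧ g S x y

theorem env_mono (g : Rel ι → Rel ι) : MonotoneF (env g) := by
  rintro R S h x y ⟨T, hT, hg⟩
  exact ⟨T, fun a b hab => h a b (hT a b hab), hg⟩

theorem le_env (g : Rel ι → Rel ι) (R : Rel ι) : relLE (g R) (env g R) :=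
  fun x y h => ⟨R, fun _ _ h' => h', h⟩

theorem env_infl {g : Rel ι → Rel ι} (hid : ∀ R, relLE R (g R)) (R : Rel ι) :
    relLE R (env g R) :=
  fun x y h => le_env g R x y (hid R x y h)

theorem progress_mono {L : LTS ι Λ} {R S S' : Rel ι} (h : Progress L R S)
    (hSS : relLE S S') : Progress L R S' := by
  obtain ⟨h1, h2⟩ := h
  refine ⟨fun x y hxy => hSS x y (h1 x y hxy), fun s t hst => ?_⟩
  obtain ⟨hfwd, hbwd⟩ := h2 s t hst
  constructor
  · intro a s' htr
    obtain ⟨t', hw, hS⟩ := hfwd a s' htr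
    exact ⟨t', hw, hSS _ _ hS⟩
  · intro a t' htr
    obtain ⟨s', hw, hS⟩ := hbwd a t' htr
    exact ⟨s', hw, hSS _ _ hS⟩

theorem progress_restrict {L : LTS ι Λ} {R' R S : Rel ι} (hR : relLE R' R)
    (h : Progress L R S) : Progress L R' S :=
  ⟨fun x y hxy => h.1 x y (hR x y hxy), fun s t hst => h.2 s t (hR s t hst)⟩

/-- stages of a power iteration are increasing for inflationary functions -/
theorem stage_le {M : Rel ι → Rel ι} (hinfl : ∀ R, relLE R (M R)) (S : Rel ι) :
    ∀ {k N : ℕ}, k ≤ N → relLE (funPow M k S) (funPow M N S) := by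
  intro k N h
  induction h with
  | refl => exact fun _ _ h => h
  | step _ ih => exact fun x y h => hinfl _ x y (ih x y h)

theorem finite_le_stage {M : Rel ι → Rel ι} (hinfl : ∀ R, relLE R (M R))
    {T S : Rel ι} (hfin : finiteRel T) (hle : relLE T (funOmega M S)) :
    ∃ N, relLE T (funPow M N S) := by
  classical
  have key : ∀ p : ι × ι, ∃ n, T p.1 p.2 → funPow M n S p.1 p.2 := by
    intro p
    by_cases h : T p.1 p.2
    · obtain ⟨n, hn⟩ := hle p.1 p.2 h
      exact ⟨n, fun _ => hn⟩
    · exact ⟨0, fun h' => absurd h' h⟩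
  choose nf hnf using key
  obtain ⟨N, hN⟩ := (hfin.image nf).bddAbove
  refine ⟨N, fun x y hxy => ?_⟩
  have h1 : nf (x, y) ≤ N := hN ⟨(x, y), hxy, rfl⟩
  exact stage_le hinfl S h1 x y (hnf (x, y) hxy)

theorem env_cont {g : Rel ι → Rel ι} (hc : ContinuousF g) : ContinuousF (env g) := by
  rintro R x y ⟨T, hT, hg⟩
  obtain ⟨T', hT'le, hfin, hg'⟩ := hc T x y hg
  exact ⟨T', fun a b hab => hT a b (hT'le a b hab), hfin,
    ⟨T', fun _ _ h => h, hg'⟩⟩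

theorem absorb {g : Rel ι → Rel ι} (hc : ContinuousF g) (hid : ∀ R, relLE R (g R))
    (S : Rel ι) : relLE (env g (funOmega (env g) S)) (funOmega (env g) S) := by
  rintro x y ⟨T, hT, hg⟩
  obtain ⟨T', hT'le, hfin, hg'⟩ := hc T x y hg
  obtain ⟨N, hN⟩ := finite_le_stage (env_infl hid) hfin
    (fun a b hab => hT a b (hT'le a b hab))
  exact ⟨N + 1, T', hN, hg'⟩

theorem omega_idem {g : Rel ι → Rel ι} (hc : ContinuousF g) (hid : ∀ R, relLE R (g R))
    (S : Rel ι) : ∀ m, relLE (funPow (env g) m (funOmega (env g) S)) (funOmega (env g) S) := by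
  intro m
  induction m with
  | zero => exact fun _ _ h => h
  | succ m ih =>
    intro x y h
    exact absorb hc hid S x y (env_mono g _ _ ih x y h)

theorem omega_omega {g : Rel ι → Rel ι} (hc : ContinuousF g) (hid : ∀ R, relLE R (g R))
    (S : Rel ι) : relLE (funOmega (env g) (funOmega (env g) S)) (funOmega (env g) S) := by
  rintro x y ⟨m, h⟩
  exact omega_idem hc hid S m x y h

theorem pow_le_pow {g : Rel ι → Rel ι} (n : ℕ) (R : Rel ι) :
    relLE (funPow g n R) (funPow (env g) n R) := by
  induction n with
  | zero => exact fun _ _ h => h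
  | succ n ih =>
    intro x y h
    exact env_mono g _ _ ih x y (le_env g (funPow g n R) x y h)

theorem omega_le_omega {g : Rel ι → Rel ι} (R : Rel ι) :
    relLE (funOmega g R) (funOmega (env g) R) := by
  rintro x y ⟨n, h⟩
  exact ⟨n, pow_le_pow n R x y h⟩

theorem g_evolves {L : LTS ι Λ} {F : Set (Rel ι → Rel ι)} (hF : Compatible L F) :
    Evolves L (fid (setFun F)) (funOmega (fid (setFun F))) := by
  intro R S hRS
  constructor
  · intro x y hxy
    rcases hxy with hset | hid
    · obtain ⟨f, hfF, hfR⟩ := hset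
      exact (hF.2 f hfF R S hRS).1 x y hfR
    · exact ⟨0, hRS.1 x y hid⟩
  · intro s t hst
    rcases hst with hset | hid
    · obtain ⟨f, hfF, hfR⟩ := hset
      exact (hF.2 f hfF R S hRS).2 s t hfR
    · obtain ⟨hfwd, hbwd⟩ := hRS.2 s t hid
      constructor
      · intro a s' htr
        obtain ⟨t', hw, hS⟩ := hfwd a s' htr
        exact ⟨t', hw, 0, hS⟩
      · intro a t' htr
        obtain ⟨s', hw, hS⟩ := hbwd a t' htr
        exact ⟨s', hw, 0, hS⟩

theorem env_evolves {L : LTS ι Λ} {F : Set (Rel ι → Rel ι)} (hF : Compatible L F) :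
    Evolves L (env (fid (setFun F))) (funOmega (env (fid (setFun F)))) := by
  intro R S hRS
  set g := fid (setFun F) with hg
  constructor
  · rintro x y ⟨T, hT, hgT⟩
    have hTS : Progress L T S := progress_restrict hT hRS
    have := (g_evolves hF T S hTS).1 x y hgT
    exact omega_le_omega S x y this
  · rintro s t ⟨T, hT, hgT⟩
    have hTS : Progress L T S := progress_restrict hT hRS
    obtain ⟨hfwd, hbwd⟩ := (g_evolves hF T S hTS).2 s t hgT
    constructor
    · intro a s' htr
      obtain ⟨t', hw, hS⟩ := hfwd a s' htr
      exact ⟨t', hw, omega_le_omega S _ _ hS⟩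
    · intro a t' htr
      obtain ⟨s', hw, hS⟩ := hbwd a t' htr
      exact ⟨s', hw, omega_le_omega S _ _ hS⟩

theorem pow_evolves {L : LTS ι Λ} {F : Set (Rel ι → Rel ι)} (hF : Compatible L F)
    (hc : ContinuousF (fid (setFun F))) (hid : ∀ R, relLE R (fid (setFun F) R)) :
    ∀ n, Evolves L (funPow (env (fid (setFun F))) n) (funOmega (env (fid (setFun F)))) := by
  intro n
  induction n with
  | zero => exact fun R S hRS => progress_mono hRS (fun x y h => ⟨0, h⟩)
  | succ n ih =>
    intro R S hRS
    have h1 := env_evolves hF _ _ (ih R S hRS)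
    exact progress_mono h1 (omega_omega hc hid S)

theorem omega_evolves {L : LTS ι Λ} {F : Set (Rel ι → Rel ι)} (hF : Compatible L F)
    (hc : ContinuousF (fid (setFun F))) (hid : ∀ R, relLE R (fid (setFun F) R)) :
    Evolves L (funOmega (env (fid (setFun F)))) (funOmega (env (fid (setFun F)))) := by
  intro R S hRS
  constructor
  · rintro x y ⟨n, h⟩
    exact (pow_evolves hF hc hid n R S hRS).1 x y h
  · rintro s t ⟨n, h⟩
    exact (pow_evolves hF hc hid n R S hRS).2 s t h

end Stmt6Aux

open Stmt6Aux


/-- every member of a compatible set of continuous functions is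
an up-to technique: if `R` progresses to `f R`, then `R ⊆ ≈`. -/
theorem stmt6 {ι Λ : Type} (L : LTS ι Λ) (F : Set (Rel ι → Rel ι))
    (hF : Compatible L F) (f : Rel ι → Rel ι) (hf : f ∈ F) :
    ∀ R : Rel ι, Progress L R (f R) → relLE R (Bisim L) := by
  intro R hR x y hxy
  set g := fid (setFun F) with hgdef
  -- g is continuous
  have hc : ContinuousF g := by
    rintro T a b (hset | hidc)
    · obtain ⟨f', hf'F, hf'T⟩ := hset
      obtain ⟨S, hSle, hSfin, hfS⟩ := hF.1 f' hf'F T a b hf'T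
      exact ⟨S, hSle, hSfin, Or.inl ⟨f', hf'F, hfS⟩⟩
    · refine ⟨fun u v => u = a ∧ v = b, ?_, ?_, Or.inr ⟨rfl, rfl⟩⟩
      · rintro u v ⟨rfl, rfl⟩; exact hidc
      · have : {p : ι × ι | p.1 = a ∧ p.2 = b} ⊆ {(a, b)} := by
          rintro ⟨u, v⟩ ⟨rfl, rfl⟩; rfl
        exact Set.Finite.subset (Set.finite_singleton _) this
  have hid : ∀ T : Rel ι, relLE T (g T) := fun T u v h => Or.inr h
  -- f R ⊆ funOmega (env g) R
  have hfR : relLE (f R) (funOmega (env g) R) := by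
    intro u v h
    exact ⟨1, le_env g R u v (Or.inl ⟨f, hf, h⟩)⟩
  have h1 : Progress L R (funOmega (env g) R) := progress_mono hR hfR
  have h2 := omega_evolves hF hc hid _ _ h1
  have h3 : Progress L (funOmega (env g) R) (funOmega (env g) R) :=
    progress_mono h2 (omega_omega hc hid R)
  exact ⟨funOmega (env g) R, h3, 0, hxy⟩
end

section
/- If F is a compatible set of continuous functions on relations and f ∈ F, then f(≈) ⊆ ≈, where ≈ is the bisimilarity of the labeled transition system. -/
open Paper

namespace Stmt7Aux

variable {ι Λ : Type}

/-- The closure of bisimilarity under applying members of `F` to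
(finite) subrelations. -/
inductive Cl (L : LTS ι Λ) (F : Set (Rel ι → Rel ι)) : ι → ι → Prop
  | base {x y} : Bisim L x y → Cl L F x y
  | step {g : Rel ι → Rel ι} {T : Rel ι} {x y} :
      g ∈ F → (∀ u v, T u v → Cl L F u v) → g T x y → Cl L F x y

lemma setFun_cl_le (L : LTS ι Λ) (F : Set (Rel ι → Rel ι))
    (hcont : ∀ f ∈ F, ContinuousF f) :
    relLE (setFun F (Cl L F)) (Cl L F) := by
  rintro x y ⟨g, hgF, hg⟩
  obtain ⟨T, hTle, -, hgT⟩ := hcont g hgF (Cl L F) x y hg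
  exact Cl.step hgF hTle hgT

lemma cl_fixed (L : LTS ι Λ) (F : Set (Rel ι → Rel ι))
    (hcont : ∀ f ∈ F, ContinuousF f) :
    fid (setFun F) (Cl L F) = Cl L F := by
  funext x y
  apply propext
  constructor
  · rintro (h | h)
    · exact setFun_cl_le L F hcont x y h
    · exact h
  · exact Or.inr

lemma funPow_succ' (g : Rel ι → Rel ι) (n : ℕ) (R : Rel ι) :
    funPow g (n + 1) R = funPow g n (g R) := by
  induction n with
  | zero => rfl
  | succ n ih =>
    show g (funPow g (n + 1) R) = g (funPow g n (g R))
    rw [ih]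

lemma omega_cl_le (L : LTS ι Λ) (F : Set (Rel ι → Rel ι))
    (hcont : ∀ f ∈ F, ContinuousF f) :
    relLE (funOmega (fid (setFun F)) (Cl L F)) (Cl L F) := by
  have key : ∀ n, funPow (fid (setFun F)) n (Cl L F) = Cl L F := by
    intro n
    induction n with
    | zero => rfl
    | succ n ih => rw [funPow_succ', cl_fixed L F hcont, ih]
  rintro x y ⟨n, hn⟩
  rwa [key n] at hn

lemma cl_progress (L : LTS ι Λ) (F : Set (Rel ι → Rel ι))
    (hF : Compatible L F) :
    ∀ x y, Cl L F x y →
      (∀ a s', L.tr x a s' → ∃ t', L.weak y a t' ∧ Cl L F s' t') ∧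
      (∀ a t', L.tr y a t' → ∃ s', L.weak x a s' ∧ Cl L F s' t') := by
  intro x y h
  induction h with
  | base h =>
    obtain ⟨R, hR, hxy⟩ := h
    obtain ⟨h1, h2⟩ := hR.2 _ _ hxy
    constructor
    · intro a s' hs'
      obtain ⟨t', hw, hRt⟩ := h1 a s' hs'
      exact ⟨t', hw, Cl.base ⟨R, hR, hRt⟩⟩
    · intro a t' ht'
      obtain ⟨s', hw, hRt⟩ := h2 a t' ht'
      exact ⟨s', hw, Cl.base ⟨R, hR, hRt⟩⟩
  | @step g T x y hgF hT hgT ih =>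
    have hprog : Progress L T (Cl L F) := ⟨hT, fun u v huv => ih u v huv⟩
    have hev := hF.2 g hgF T (Cl L F) hprog
    obtain ⟨h1, h2⟩ := hev.2 x y hgT
    have hle := omega_cl_le L F hF.1
    constructor
    · intro a s' hs'
      obtain ⟨t', hw, ht⟩ := h1 a s' hs'
      exact ⟨t', hw, hle _ _ ht⟩
    · intro a t' ht'
      obtain ⟨s', hw, ht⟩ := h2 a t' ht'
      exact ⟨s', hw, hle _ _ ht⟩

lemma cl_bisim (L : LTS ι Λ) (F : Set (Rel ι → Rel ι))
    (hF : Compatible L F) : IsBisimulation L (Cl L F) :=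
  ⟨fun _ _ h => h, cl_progress L F hF⟩

end Stmt7Aux

/-- if `F` is a compatible set of continuous functions and
`f ∈ F`, then `f(≈) ⊆ ≈`. -/
theorem stmt7 {ι Λ : Type} (L : LTS ι Λ) (F : Set (Rel ι → Rel ι))
    (hF : Compatible L F) (f : Rel ι → Rel ι) (hf : f ∈ F) :
    relLE (f (Bisim L)) (Bisim L) := by
  intro x y h
  obtain ⟨T, hTle, -, hfT⟩ := hF.1 f hf (Bisim L) x y h
  exact ⟨Stmt7Aux.Cl L F, Stmt7Aux.cl_bisim L F hF,
    Stmt7Aux.Cl.step hf (fun u v huv => Stmt7Aux.Cl.base (hTle u v huv)) hfT⟩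
end

section
/- If F is a diacritically compatible set of continuous functions on relations, then for every f ∈ F, f(≈⋆) ⊆ ≈⋆, where ≈⋆ is ⋆-bisimilarity. -/
namespace Paper

/-- An LTS whose transitions are partitioned into passive and active ones. -/
structure DLTS (ι Λ : Type) extends LTS ι Λ where
  passive : Λ → Prop

/-- Diacritical progress: `R ⤳ S, T`. -/
def DProgress {ι Λ : Type} (L : DLTS ι Λ) (R S T : Rel ι) : Prop :=
  relLE R S ∧ relLE R T ∧ ∀ s t, R s t →
    (∀ a s', L.tr s a s' → ∃ t', L.toLTS.weak t a t' ∧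
      ((L.passive a ∧ S s' t') ∨ (¬ L.passive a ∧ T s' t'))) ∧
    (∀ a t', L.tr t a t' → ∃ s', L.toLTS.weak s a s' ∧
      ((L.passive a ∧ S s' t') ∨ (¬ L.passive a ∧ T s' t')))

def IsStarBisimulation {ι Λ : Type} (L : DLTS ι Λ) (R : Rel ι) : Prop :=
  DProgress L R R R

/-- ⋆-bisimilarity: the union of all ⋆-bisimulations. -/
def StarBisim {ι Λ : Type} (L : DLTS ι Λ) : Rel ι :=
  fun s t => ∃ R, IsStarBisimulation L R ∧ R s t

/-- `f` evolves to `(g, h)`. -/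
def DEvolves {ι Λ : Type} (L : DLTS ι Λ) (f g h : Rel ι → Rel ι) : Prop :=
  ∀ R T, DProgress L R R T → DProgress L (f R) (g R) (h T)

/-- `f` strongly evolves to `(g, h)`. -/
def SEvolves {ι Λ : Type} (L : DLTS ι Λ) (f g h : Rel ι → Rel ι) : Prop :=
  ∀ R S T, DProgress L R S T → DProgress L (f R) (g S) (h T)

/-- `S` witnesses the diacritical compatibility conditions for `F`. -/
def DCompatWitness {ι Λ : Type} (L : DLTS ι Λ)
    (F S : Set (Rel ι → Rel ι)) : Prop :=
  S ⊆ F ∧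
  (∀ f ∈ S, SEvolves L f (funOmega (fid (setFun S))) (funOmega (fid (setFun F)))) ∧
  (∀ f ∈ F, DEvolves L f
    (funOmega (fid (setFun S)) ∘ fid (setFun F) ∘ funOmega (fid (setFun S)))
    (funOmega (fid (setFun F))))

/-- A diacritically compatible set of continuous functions. -/
def DCompatible {ι Λ : Type} (L : DLTS ι Λ) (F : Set (Rel ι → Rel ι)) : Prop :=
  (∀ f ∈ F, ContinuousF f) ∧ ∃ S, DCompatWitness L F S

/-- `strong F`: the union of all witnessing subsets. -/
def strongOf {ι Λ : Type} (L : DLTS ι Λ) (F : Set (Rel ι → Rel ι)) :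
    Set (Rel ι → Rel ι) :=
  {f | ∃ S, DCompatWitness L F S ∧ f ∈ S}

end Paper

open Paper

namespace Stmt10Aux

open Paper

variable {ι Λ : Type}

lemma relExt {R S : Rel ι} (h : ∀ x y, R x y ↔ S x y) : R = S :=
  funext fun x => funext fun y => propext (h x y)

def relU (C : Set (Rel ι)) : Rel ι := fun x y => ∃ R ∈ C, R x y

lemma dprog_mono {L : DLTS ι Λ} {R S T S' T' : Rel ι}
    (h : DProgress L R S T) (hS : relLE S S') (hT : relLE T T') :
    DProgress L R S' T' := by
  obtain ⟨h1, h2, h3⟩ := h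
  refine ⟨fun x y hxy => hS x y (h1 x y hxy), fun x y hxy => hT x y (h2 x y hxy),
    fun s t hst => ?_⟩
  obtain ⟨c1, c2⟩ := h3 s t hst
  constructor
  · intro a s' htr
    obtain ⟨t', hw, hc⟩ := c1 a s' htr
    exact ⟨t', hw, hc.imp (fun h => ⟨h.1, hS _ _ h.2⟩) (fun h => ⟨h.1, hT _ _ h.2⟩)⟩
  · intro a t' htr
    obtain ⟨s', hw, hc⟩ := c2 a t' htr
    exact ⟨s', hw, hc.imp (fun h => ⟨h.1, hS _ _ h.2⟩) (fun h => ⟨h.1, hT _ _ h.2⟩)⟩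

lemma dprog_union {L : DLTS ι Λ} {C : Set (Rel ι)} {S T : Rel ι}
    (h : ∀ R ∈ C, DProgress L R S T) : DProgress L (relU C) S T :=
  ⟨fun x y ⟨R, hR, hxy⟩ => (h R hR).1 x y hxy,
   fun x y ⟨R, hR, hxy⟩ => (h R hR).2.1 x y hxy,
   fun s t ⟨R, hR, hst⟩ => (h R hR).2.2 s t hst⟩

lemma dprog_or {L : DLTS ι Λ} {A B S T : Rel ι}
    (hA : DProgress L A S T) (hB : DProgress L B S T) :
    DProgress L (fun x y => A x y ∨ B x y) S T :=
  ⟨fun x y h => h.elim (hA.1 x y) (hB.1 x y),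
   fun x y h => h.elim (hA.2.1 x y) (hB.2.1 x y),
   fun s t h => h.elim (hA.2.2 s t) (hB.2.2 s t)⟩

lemma dprog_setFun {L : DLTS ι Λ} {G : Set (Rel ι → Rel ι)} {Z P A : Rel ι}
    (h : ∀ f ∈ G, DProgress L (f Z) P A) : DProgress L (setFun G Z) P A :=
  ⟨fun x y ⟨f, hf, hxy⟩ => (h f hf).1 x y hxy,
   fun x y ⟨f, hf, hxy⟩ => (h f hf).2.1 x y hxy,
   fun s t ⟨f, hf, hst⟩ => (h f hf).2.2 s t hst⟩

lemma starBisim_prog (L : DLTS ι Λ) :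
    DProgress L (StarBisim L) (StarBisim L) (StarBisim L) := by
  refine ⟨fun x y h => h, fun x y h => h, fun s t hst => ?_⟩
  obtain ⟨R, hR, hst'⟩ := hst
  obtain ⟨c1, c2⟩ := hR.2.2 s t hst'
  constructor
  · intro a u htr
    obtain ⟨t', hw, hc⟩ := c1 a u htr
    exact ⟨t', hw, hc.imp (fun h => ⟨h.1, R, hR, h.2⟩) (fun h => ⟨h.1, R, hR, h.2⟩)⟩
  · intro a u htr
    obtain ⟨s', hw, hc⟩ := c2 a u htr
    exact ⟨s', hw, hc.imp (fun h => ⟨h.1, R, hR, h.2⟩) (fun h => ⟨h.1, R, hR, h.2⟩)⟩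

/-- Impredicatively encoded transfinite closure of `R` under `g`. -/
inductive SCl (g : Rel ι → Rel ι) (R : Rel ι) : Rel ι → Prop
  | base : SCl g R R
  | step {Z} : SCl g R Z → SCl g R (g Z)
  | union (C : Set (Rel ι)) : (∀ Z ∈ C, SCl g R Z) → SCl g R (relU C)

def scl (g : Rel ι → Rel ι) (R : Rel ι) : Rel ι := relU {Z | SCl g R Z}

lemma scl_mem_le {g : Rel ι → Rel ι} {R Z : Rel ι} (h : SCl g R Z) :
    relLE Z (scl g R) := fun x y hxy => ⟨Z, h, hxy⟩

lemma scl_scl_mem (g : Rel ι → Rel ι) (R : Rel ι) : SCl g R (scl g R) :=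
  SCl.union _ (fun _ h => h)

lemma scl_base_le (g : Rel ι → Rel ι) (R : Rel ι) : relLE R (scl g R) :=
  scl_mem_le SCl.base

lemma scl_fid_fix (f : Rel ι → Rel ι) (R : Rel ι) :
    fid f (scl (fid f) R) = scl (fid f) R :=
  relExt fun x y => ⟨fun h => scl_mem_le (SCl.step (scl_scl_mem _ _)) x y h,
    fun h => Or.inr h⟩

lemma pow_fix {g : Rel ι → Rel ι} {P : Rel ι} (h : g P = P) (n : ℕ) :
    funPow g n P = P := by
  induction n with
  | zero => rfl
  | succ n ih => show g (funPow g n P) = P; rw [ih, h]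

lemma omega_fix {g : Rel ι → Rel ι} {P : Rel ι} (h : g P = P) :
    funOmega g P = P :=
  relExt fun x y => ⟨fun ⟨n, hn⟩ => by rwa [pow_fix h n] at hn, fun hxy => ⟨0, hxy⟩⟩

lemma pow_mem_scl (g : Rel ι → Rel ι) (R : Rel ι) (n : ℕ) :
    SCl g R (funPow g n R) := by
  induction n with
  | zero => exact SCl.base
  | succ n ih => exact SCl.step ih

lemma omega_le_scl (g : Rel ι → Rel ι) (R : Rel ι) :
    relLE (funOmega g R) (scl g R) :=
  fun x y ⟨n, hn⟩ => scl_mem_le (pow_mem_scl g R n) x y hn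

lemma inner_prog (L : DLTS ι Λ) (S F : Set (Rel ι → Rel ι))
    (hSev : ∀ f ∈ S, SEvolves L f (funOmega (fid (setFun S))) (funOmega (fid (setFun F))))
    {R P A : Rel ι}
    (hP : relLE (funOmega (fid (setFun S)) P) P)
    (hA : relLE (funOmega (fid (setFun F)) A) A)
    (hbase : DProgress L R P A) :
    ∀ {Z}, SCl (fid (setFun S)) R Z → DProgress L Z P A := by
  intro Z hZ
  induction hZ with
  | base => exact hbase
  | step hZ ih =>
      refine dprog_or (dprog_setFun (fun f hf => ?_)) ih
      exact dprog_mono (hSev f hf _ _ _ ih) hP hA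
  | union C hC ih => exact dprog_union ih

lemma scl_prog (L : DLTS ι Λ) (S F : Set (Rel ι → Rel ι))
    (hSev : ∀ f ∈ S, SEvolves L f (funOmega (fid (setFun S))) (funOmega (fid (setFun F))))
    {R A : Rel ι}
    (hA : relLE (funOmega (fid (setFun F)) A) A)
    (hbase : DProgress L R (scl (fid (setFun S)) R) A) :
    DProgress L (scl (fid (setFun S)) R) (scl (fid (setFun S)) R) A := by
  have hP : relLE (funOmega (fid (setFun S)) (scl (fid (setFun S)) R))
      (scl (fid (setFun S)) R) := by
    rw [omega_fix (scl_fid_fix _ _)]; exact fun x y h => h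
  exact dprog_union (fun Z hZ => inner_prog L S F hSev hP hA hbase hZ)

/-- The stages of the grand construction. -/
inductive Stg (L : DLTS ι Λ) (S F : Set (Rel ι → Rel ι)) : Rel ι → Prop
  | base : Stg L S F (StarBisim L)
  | sharp {R} : Stg L S F R → Stg L S F (scl (fid (setFun S)) R)
  | fstep {R} : Stg L S F R →
      Stg L S F (scl (fid (setFun S)) (fid (setFun F) (scl (fid (setFun S)) R)))
  | union (C : Set (Rel ι)) : (∀ R ∈ C, Stg L S F R) → Stg L S F (relU C)

def bigX (L : DLTS ι Λ) (S F : Set (Rel ι → Rel ι)) : Rel ι :=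
  relU {R | Stg L S F R}

lemma stg_le {L : DLTS ι Λ} {S F : Set (Rel ι → Rel ι)} {R : Rel ι}
    (h : Stg L S F R) : relLE R (bigX L S F) := fun x y hxy => ⟨R, h, hxy⟩

lemma bigX_stg (L : DLTS ι Λ) (S F : Set (Rel ι → Rel ι)) :
    Stg L S F (bigX L S F) := Stg.union _ (fun _ h => h)

lemma scl_bigX_eq (L : DLTS ι Λ) (S F : Set (Rel ι → Rel ι)) :
    scl (fid (setFun S)) (bigX L S F) = bigX L S F :=
  relExt fun x y => ⟨fun h => stg_le (Stg.sharp (bigX_stg L S F)) x y h,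
    fun h => scl_base_le _ _ x y h⟩

lemma gS_bigX_eq (L : DLTS ι Λ) (S F : Set (Rel ι → Rel ι)) :
    fid (setFun S) (bigX L S F) = bigX L S F := by
  have h1 : relLE (fid (setFun S) (bigX L S F)) (scl (fid (setFun S)) (bigX L S F)) :=
    scl_mem_le (SCl.step SCl.base)
  rw [scl_bigX_eq] at h1
  exact relExt fun x y => ⟨h1 x y, fun h => Or.inr h⟩

lemma gF_bigX_eq (L : DLTS ι Λ) (S F : Set (Rel ι → Rel ι)) :
    fid (setFun F) (bigX L S F) = bigX L S F := by
  have h0 : Stg L S F (scl (fid (setFun S)) (fid (setFun F)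
      (scl (fid (setFun S)) (bigX L S F)))) := Stg.fstep (bigX_stg L S F)
  rw [scl_bigX_eq] at h0
  have h1 : relLE (fid (setFun F) (bigX L S F)) (bigX L S F) :=
    fun x y h => stg_le h0 x y (scl_base_le _ _ x y h)
  exact relExt fun x y => ⟨h1 x y, fun h => Or.inr h⟩

lemma stg_prog (L : DLTS ι Λ) (S F : Set (Rel ι → Rel ι))
    (hSev : ∀ f ∈ S, SEvolves L f (funOmega (fid (setFun S))) (funOmega (fid (setFun F))))
    (hFev : ∀ f ∈ F, DEvolves L f
      (funOmega (fid (setFun S)) ∘ fid (setFun F) ∘ funOmega (fid (setFun S)))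
      (funOmega (fid (setFun F)))) :
    ∀ {R}, Stg L S F R → DProgress L R R (bigX L S F) := by
  have hA : relLE (funOmega (fid (setFun F)) (bigX L S F)) (bigX L S F) := by
    rw [omega_fix (gF_bigX_eq L S F)]; exact fun x y h => h
  intro R hR
  induction hR with
  | base =>
      exact dprog_mono (starBisim_prog L) (fun x y h => h) (stg_le Stg.base)
  | @sharp R hR ih =>
      exact scl_prog L S F hSev hA (dprog_mono ih (scl_base_le _ _) (fun x y h => h))
  | @fstep R hR ih =>
      have hsharp : DProgress L (scl (fid (setFun S)) R) (scl (fid (setFun S)) R)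
          (bigX L S F) :=
        scl_prog L S F hSev hA (dprog_mono ih (scl_base_le _ _) (fun x y h => h))
      have homR' : funOmega (fid (setFun S)) (scl (fid (setFun S)) R)
          = scl (fid (setFun S)) R := omega_fix (scl_fid_fix _ _)
      refine scl_prog L S F hSev hA ?_
      refine dprog_or (dprog_setFun (fun f hf => ?_))
        (dprog_mono hsharp
          (fun x y h => scl_base_le _ _ x y (Or.inr h)) (fun x y h => h))
      have hD0 := hFev f hf (scl (fid (setFun S)) R) (bigX L S F) hsharp
      have e : (funOmega (fid (setFun S)) ∘ fid (setFun F) ∘ funOmega (fid (setFun S)))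
          (scl (fid (setFun S)) R)
          = funOmega (fid (setFun S)) (fid (setFun F) (scl (fid (setFun S)) R)) := by
        show funOmega (fid (setFun S)) (fid (setFun F)
          (funOmega (fid (setFun S)) (scl (fid (setFun S)) R))) = _
        rw [homR']
      rw [e] at hD0
      exact dprog_mono hD0 (omega_le_scl _ _) hA
  | union C hC ih =>
      exact dprog_union (fun R hR =>
        dprog_mono (ih R hR) (fun x y h => ⟨R, hR, h⟩) (fun x y h => h))

lemma bigX_prog (L : DLTS ι Λ) (S F : Set (Rel ι → Rel ι))
    (hSev : ∀ f ∈ S, SEvolves L f (funOmega (fid (setFun S))) (funOmega (fid (setFun F))))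
    (hFev : ∀ f ∈ F, DEvolves L f
      (funOmega (fid (setFun S)) ∘ fid (setFun F) ∘ funOmega (fid (setFun S)))
      (funOmega (fid (setFun F)))) :
    DProgress L (bigX L S F) (bigX L S F) (bigX L S F) :=
  dprog_union (fun R hR =>
    dprog_mono (stg_prog L S F hSev hFev hR) (stg_le hR) (fun x y h => h))

end Stmt10Aux

/-- if `F` is diacritically compatible then for every `f ∈ F`,
`f(≈⋆) ⊆ ≈⋆`. -/
theorem stmt10 {ι Λ : Type} (L : DLTS ι Λ) (F : Set (Rel ι → Rel ι))
    (hF : DCompatible L F) (f : Rel ι → Rel ι) (hf : f ∈ F) :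
    relLE (f (StarBisim L)) (StarBisim L) := by
  obtain ⟨hcont, S, hSsub, hSev, hFev⟩ := hF
  have hXprog := Stmt10Aux.bigX_prog L S F hSev hFev
  have hXle : relLE (Stmt10Aux.bigX L S F) (StarBisim L) :=
    fun x y h => ⟨Stmt10Aux.bigX L S F, hXprog, h⟩
  have hEq : StarBisim L = Stmt10Aux.bigX L S F :=
    Stmt10Aux.relExt fun x y =>
      ⟨fun h => Stmt10Aux.stg_le Stmt10Aux.Stg.base x y h, hXle x y⟩
  intro x y hxy
  rw [hEq] at hxy
  have h2 : fid (setFun F) (Stmt10Aux.bigX L S F) x y := Or.inl ⟨f, hf, hxy⟩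
  rw [Stmt10Aux.gF_bigX_eq L S F] at h2
  exact hXle x y h2
end
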